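/- In the quotient ring ℂ[p,x₁,…,x₅]/(p x₁⁴, p x₂⁴, p x₃⁴, p x₄⁴, p x₅⁴, x₁⁵+x₂⁵+x₃⁵+x₄⁵+x₅⁵), the classes of the elements (p·x₁x₂x₃x₄x₅)^k for k = 0, 1, 2, 3 are linearly independent over ℂ, and (p·x₁x₂x₃x₄x₅)⁴ = 0. -/
import Mathlib


open MvPolynomial

/-- The Jacobi ideal of `pW` for the Fermat quintic `W = x₁⁵+⋯+x₅⁵`: generated by
`p·xᵢ⁴` (`i = 1,…,5`) and `x₁⁵+⋯+x₅⁵`, with variables `p,x₁,…,x₅` indexed by `0,…,5`. -/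
noncomputable def pW_JacobiIdeal : Ideal (MvPolynomial (Fin 6) ℂ) :=
  Ideal.span
    ({X 0 * X 1 ^ 4, X 0 * X 2 ^ 4, X 0 * X 3 ^ 4, X 0 * X 4 ^ 4, X 0 * X 5 ^ 4,
      X 1 ^ 5 + X 2 ^ 5 + X 3 ^ 5 + X 4 ^ 5 + X 5 ^ 5} : Set (MvPolynomial (Fin 6) ℂ))

local notation "mk" => Ideal.Quotient.mk pW_JacobiIdeal

/-- The exponent vector `(1,1,1,1,1,1)`. -/
noncomputable def ttAux : Fin 6 →₀ ℕ :=
  Finsupp.single 0 1 + Finsupp.single 1 1 + Finsupp.single 2 1 + Finsupp.single 3 1 +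
    Finsupp.single 4 1 + Finsupp.single 5 1

lemma ttAux_apply (k : ℕ) (i : Fin 6) : (k • ttAux) i = k := by
  fin_cases i <;> simp [ttAux]

lemma e_eq_monomial :
    (X 0 * (X 1 * X 2 * X 3 * X 4 * X 5) : MvPolynomial (Fin 6) ℂ) = monomial ttAux 1 := by
  simp only [ttAux, X, monomial_mul, mul_one]
  congr 1
  abel_nf

lemma smul_ttAux_inj {j k : ℕ} (h : (j • ttAux : Fin 6 →₀ ℕ) = k • ttAux) : j = k := by
  have := DFunLike.congr_fun h 0
  rwa [ttAux_apply, ttAux_apply] at this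

lemma coeff_e_pow (j k : ℕ) :
    coeff (k • ttAux) ((X 0 * (X 1 * X 2 * X 3 * X 4 * X 5) : MvPolynomial (Fin 6) ℂ) ^ j)
      = if j = k then 1 else 0 := by
  rw [e_eq_monomial, monomial_pow, coeff_monomial, one_pow]
  by_cases h : j = k
  · subst h; simp
  · rw [if_neg (fun hh => h (smul_ttAux_inj hh)), if_neg h]

lemma gen_eq_monomial (i : Fin 6) : (X 0 * X i ^ 4 : MvPolynomial (Fin 6) ℂ)
    = monomial (Finsupp.single 0 1 + Finsupp.single i 4) 1 := by
  simp [X, monomial_pow, monomial_mul]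

lemma Xpow5_eq_monomial (i : Fin 6) :
    (X i ^ 5 : MvPolynomial (Fin 6) ℂ) = monomial (Finsupp.single i 5) 1 := by
  simp [X_pow_eq_monomial]

lemma key_coeff_zero (f : MvPolynomial (Fin 6) ℂ) (hf : f ∈ pW_JacobiIdeal) (k : ℕ)
    (hk : k ≤ 3) : coeff (k • ttAux) f = 0 := by
  have main : ∀ f ∈ pW_JacobiIdeal, ∀ g : MvPolynomial (Fin 6) ℂ,
      coeff (k • ttAux) (g * f) = 0 := by
    intro f hf
    refine Submodule.span_induction ?_ ?_ ?_ ?_ hf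
    · intro x hx g
      have hle : ∀ i : Fin 6, i ≠ 0 →
          ¬ (Finsupp.single (0 : Fin 6) 1 + Finsupp.single i 4 ≤ k • ttAux) := by
        intro i hi h
        have := h i
        rw [ttAux_apply] at this
        simp [Finsupp.single_apply, hi.symm] at this
        omega
      have hle5 : ∀ i : Fin 6, ¬ (Finsupp.single i 5 ≤ k • ttAux) := by
        intro i h
        have := h i
        rw [ttAux_apply] at this
        simp [Finsupp.single_apply] at this
        omega
      simp only [Set.mem_insert_iff, Set.mem_singleton_iff] at hx
      rcases hx with h | h | h | h | h | h
      · subst h; rw [gen_eq_monomial, coeff_mul_monomial', if_neg (hle 1 (by decide))]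
      · subst h; rw [gen_eq_monomial, coeff_mul_monomial', if_neg (hle 2 (by decide))]
      · subst h; rw [gen_eq_monomial, coeff_mul_monomial', if_neg (hle 3 (by decide))]
      · subst h; rw [gen_eq_monomial, coeff_mul_monomial', if_neg (hle 4 (by decide))]
      · subst h; rw [gen_eq_monomial, coeff_mul_monomial', if_neg (hle 5 (by decide))]
      · subst h
        rw [mul_add, mul_add, mul_add, mul_add]
        simp only [coeff_add]
        rw [Xpow5_eq_monomial, Xpow5_eq_monomial, Xpow5_eq_monomial, Xpow5_eq_monomial,
          Xpow5_eq_monomial]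
        rw [coeff_mul_monomial', coeff_mul_monomial', coeff_mul_monomial',
          coeff_mul_monomial', coeff_mul_monomial']
        rw [if_neg (hle5 1), if_neg (hle5 2), if_neg (hle5 3), if_neg (hle5 4),
          if_neg (hle5 5)]
        ring
    · intro g; simp
    · intro a b _ _ ha hb g
      rw [mul_add, coeff_add, ha, hb, add_zero]
    · intro r a _ ha g
      rw [smul_eq_mul, ← mul_assoc, ha]
  simpa using main f hf 1

lemma mk_smul (c : ℂ) (x : MvPolynomial (Fin 6) ℂ) : c • mk x = mk (c • x) := by
  show c • (Ideal.Quotient.mkₐ ℂ pW_JacobiIdeal) x = _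
  rw [← map_smul]; rfl

theorem stmt14 :
    LinearIndependent ℂ
      (fun k : Fin 4 => (mk (X 0 * (X 1 * X 2 * X 3 * X 4 * X 5))) ^ (k : ℕ)) ∧
    (mk (X 0 * (X 1 * X 2 * X 3 * X 4 * X 5))) ^ 4 = 0 := by
  constructor
  · rw [Fintype.linearIndependent_iff]
    intro c hc i
    set e : MvPolynomial (Fin 6) ℂ := X 0 * (X 1 * X 2 * X 3 * X 4 * X 5) with he
    have hsum : (∑ j : Fin 4, c j • (mk e) ^ (j : ℕ))
        = mk (∑ j : Fin 4, c j • e ^ (j : ℕ)) := by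
      rw [map_sum]
      refine Finset.sum_congr rfl fun j _ => ?_
      rw [← map_pow, mk_smul]
    rw [hsum, Ideal.Quotient.eq_zero_iff_mem] at hc
    have hco := key_coeff_zero _ hc (i : ℕ) (by omega)
    rw [coeff_sum] at hco
    have : ∀ j : Fin 4, coeff ((i : ℕ) • ttAux) (c j • e ^ (j : ℕ))
        = if j = i then c j else 0 := by
      intro j
      rw [coeff_smul, coeff_e_pow]
      by_cases h : j = i
      · simp [h]
      · rw [if_neg (fun hh => h (Fin.val_injective hh)), if_neg h, smul_zero]
    rw [Finset.sum_congr rfl fun j _ => this j] at hco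
    simpa using hco
  · rw [← map_pow, Ideal.Quotient.eq_zero_iff_mem]
    have h4 : (X 0 * (X 1 * X 2 * X 3 * X 4 * X 5) : MvPolynomial (Fin 6) ℂ) ^ 4
        = (X 0 * X 1 ^ 4) * (X 0 ^ 3 * X 2 ^ 4 * X 3 ^ 4 * X 4 ^ 4 * X 5 ^ 4) := by ring
    rw [h4]
    exact Ideal.mul_mem_right _ _ (Ideal.subset_span (by simp))
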